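/- arXiv:2401.08161 — 6 statements merged into one kernel-verified Lean document; each statement's English description precedes it below -/
import Mathlib

section
/- Let p be an odd prime and a, b ∈ (Z/pZ)^× with 4a + b² ≡ 0 (mod p). Let α = b/2, so a = -α² and b = 2α. Define φ on Z/pZ by φ(x) = a·x⁻¹ + b for x ≠ 0 and φ(0) = b. Then α is a fixed point of φ, and for every x₀ ≠ α the orbit of x₀ under φ is purely periodic with least period exactly p - 1. -/
/-!
With `a = -α²` and `b = 2α`, `φ` is the Möbius map `x ↦ 2α - α²/x`, which has `α` as a double
fixed point. In the coordinate `n = α / (x - α)` it becomes `n ↦ n + 1` on the nonzero residues,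
except that `n = -1` (i.e. `x = 0`) goes to `n = 1`, because `φ 0 = b`. Labelling the nonzero
residues as `n = k + 1` with `k ∈ ZMod (p - 1)` turns this into the rotation `k ↦ k + 1` of
`ZMod (p - 1)`, every orbit of which has least period `p - 1`.
-/

open Function

section Parabolic

variable {K : Type*} [Field K]

-- Since `0⁻¹ = 0`, this sends `0` to `2 * α`, matching the convention `φ 0 = b`.
def parabolicMap (α x : K) : K := 2 * α - α ^ 2 * x⁻¹

lemma parabolicMap_self (α : K) : parabolicMap α α = α := by
  rcases eq_or_ne α 0 with rfl | hα
  · simp [parabolicMap]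
  · rw [parabolicMap]; field_simp; ring

lemma parabolicMap_zero (α : K) : parabolicMap α 0 = 2 * α := by
  simp [parabolicMap]

lemma parabolicMap_add_div {n : K} (α : K) (hn : n ≠ 0) (hn1 : n + 1 ≠ 0) :
    parabolicMap α (α + α / n) = α + α / (n + 1) := by
  rcases eq_or_ne α 0 with rfl | hα
  · simp [parabolicMap]
  · have : α + α / n = α * (n + 1) / n := by field_simp
    rw [parabolicMap, this]
    field_simp
    ring

end Parabolic

namespace ZMod

variable {m : ℕ} [NeZero m]

def valSucc (k : ZMod m) : ZMod (m + 1) := k.val + 1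

lemma val_valSucc (k : ZMod m) : (valSucc k).val = k.val + 1 := by
  rw [valSucc, ← Nat.cast_add_one, val_natCast_of_lt (by simpa using k.val_lt)]

lemma valSucc_ne_zero (k : ZMod m) : valSucc k ≠ 0 := by
  intro h
  simpa [h] using val_valSucc k

lemma valSucc_injective : Injective (valSucc : ZMod m → ZMod (m + 1)) := fun k l h =>
  val_injective _ (by simpa [val_valSucc] using congrArg val h)

lemma exists_valSucc_eq {x : ZMod (m + 1)} (hx : x ≠ 0) : ∃ k : ZMod m, valSucc k = x := by
  have hpos : 0 < x.val := (val_pos).2 hx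
  refine ⟨(x.val - 1 : ℕ), val_injective _ ?_⟩
  have : x.val - 1 < m := by have := x.val_lt; omega
  rw [val_valSucc, val_natCast_of_lt this]
  omega

lemma valSucc_neg_one : valSucc (-1 : ZMod m) = -1 := by
  obtain ⟨n, rfl⟩ : ∃ n, m = n + 1 := Nat.exists_eq_succ_of_ne_zero (NeZero.ne m)
  rw [valSucc, val_neg_one]
  refine eq_neg_of_add_eq_zero_left ?_
  exact_mod_cast natCast_self (n + 1 + 1)

lemma valSucc_add_one (k : ZMod m) :
    valSucc (k + 1) = if k = -1 then 1 else valSucc k + 1 := by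
  split_ifs with hk
  · simp [hk, valSucc]
  · have hlt : k.val + 1 < m := by
      refine lt_of_le_of_ne k.val_lt ?_
      intro h
      apply hk
      have := congrArg (fun n : ℕ => (n : ZMod m)) h
      simp only [Nat.cast_add, natCast_val, cast_id', id, Nat.cast_one, natCast_self] at this
      exact eq_neg_of_add_eq_zero_left this
    have h1 : (1 : ZMod m).val = 1 := by rw [val_one_eq_one_mod, Nat.mod_eq_of_lt (by omega)]
    rw [valSucc, valSucc, val_add_of_lt (by rwa [h1]), h1]
    push_cast
    rfl

end ZMod

section ParabolicChart

open ZMod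

variable {m : ℕ} [NeZero m] [Fact (m + 1).Prime]

def parabolicChart (α : ZMod (m + 1)) (k : ZMod m) : ZMod (m + 1) := α + α / valSucc k

lemma semiconj_parabolicChart (α : ZMod (m + 1)) :
    Semiconj (parabolicChart α) (· + 1) (parabolicMap α) := by
  intro k
  rw [parabolicChart, valSucc_add_one]
  split_ifs with hk
  · rw [hk, parabolicChart, valSucc_neg_one, div_neg, div_one, add_neg_cancel, parabolicMap_zero]
    ring
  · have hne : valSucc k + 1 ≠ 0 := fun h =>
      hk (valSucc_injective (by rw [valSucc_neg_one]; exact eq_neg_of_add_eq_zero_left h))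
    exact (parabolicMap_add_div α (valSucc_ne_zero k) hne).symm

lemma parabolicChart_injective {α : ZMod (m + 1)} (hα : α ≠ 0) : Injective (parabolicChart α) :=
  fun _ _ h => valSucc_injective (inv_injective (mul_left_cancel₀ hα (add_left_cancel h)))

lemma exists_parabolicChart_eq {α x : ZMod (m + 1)} (hα : α ≠ 0) (hx : x ≠ α) :
    ∃ k, parabolicChart α k = x := by
  obtain ⟨k, hk⟩ := exists_valSucc_eq (div_ne_zero hα (sub_ne_zero.2 hx))
  exact ⟨k, by rw [parabolicChart, hk, div_div_cancel₀ hα, add_sub_cancel]⟩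

lemma iterate_parabolicMap_parabolicChart (α : ZMod (m + 1)) (k : ZMod m) (T : ℕ) :
    (parabolicMap α)^[T] (parabolicChart α k) = parabolicChart α (k + T) := by
  simpa using ((semiconj_parabolicChart α).iterate_right T k).symm

lemma iterate_parabolicMap_eq_self_iff {α x : ZMod (m + 1)} (hα : α ≠ 0) (hx : x ≠ α) (T : ℕ) :
    (parabolicMap α)^[T] x = x ↔ m ∣ T := by
  obtain ⟨k, rfl⟩ := exists_parabolicChart_eq hα hx
  rw [iterate_parabolicMap_parabolicChart, (parabolicChart_injective hα).eq_iff, add_eq_left,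
    natCast_eq_zero_iff]

end ParabolicChart

theorem stmt5_general (p : ℕ) (hp : p.Prime) (hp2 : p ≠ 2)
    (a b : ZMod p) (hb : IsUnit b)
    (hΔ : 4 * a + b ^ 2 = 0)
    (φ : ZMod p → ZMod p)
    (hφ : ∀ x, φ x = if x ≠ 0 then a * x⁻¹ + b else b) :
    φ (b * 2⁻¹) = b * 2⁻¹ ∧
    ∀ x0 : ZMod p, x0 ≠ b * 2⁻¹ →
      φ^[p - 1] x0 = x0 ∧ ∀ T, 0 < T → φ^[T] x0 = x0 → p - 1 ≤ T := by
  obtain ⟨m, rfl⟩ : ∃ m, p = m + 1 := ⟨p - 1, by have := hp.one_lt; omega⟩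
  have : Fact (m + 1).Prime := ⟨hp⟩
  have : NeZero m := ⟨by have := hp.two_le; omega⟩
  have h2 : (2 : ZMod (m + 1)) ≠ 0 := fun h => hp2 <|
    (Nat.prime_dvd_prime_iff_eq hp Nat.prime_two).1
      ((ZMod.natCast_eq_zero_iff 2 _).1 (by exact_mod_cast h))
  set α := b * 2⁻¹ with hα
  have hα0 : α ≠ 0 := mul_ne_zero hb.ne_zero (inv_ne_zero h2)
  have hb_eq : b = 2 * α := by rw [hα]; field_simp
  have ha_eq : a = -α ^ 2 := by rw [hα]; field_simp; linear_combination hΔ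
  obtain rfl : φ = parabolicMap α := by
    funext x
    rcases eq_or_ne x 0 with rfl | hx
    · simp [hφ, hb_eq, parabolicMap_zero]
    · rw [hφ, if_pos hx, parabolicMap, ha_eq, hb_eq]; ring
  rw [Nat.add_sub_cancel]
  refine ⟨parabolicMap_self α, fun x hx => ⟨?_, fun T hT hTx => ?_⟩⟩
  · exact (iterate_parabolicMap_eq_self_iff hα0 hx m).2 dvd_rfl
  · exact Nat.le_of_dvd hT ((iterate_parabolicMap_eq_self_iff hα0 hx T).1 hTx)

/-- If `4a + b² = 0` in `Z/pZ` with `a, b` units, then `α = b/2` is a fixed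
point of the inversive map `φ`, and every other orbit is purely periodic with
least period exactly `p - 1`. -/
theorem stmt5 (p : ℕ) (hp : p.Prime) (hp2 : p ≠ 2)
    (a b : ZMod p) (ha : IsUnit a) (hb : IsUnit b)
    (hΔ : 4 * a + b ^ 2 = 0)
    (φ : ZMod p → ZMod p)
    (hφ : ∀ x, φ x = if x ≠ 0 then a * x⁻¹ + b else b) :
    φ (b * 2⁻¹) = b * 2⁻¹ ∧
    ∀ x0 : ZMod p, x0 ≠ b * 2⁻¹ →
      φ^[p - 1] x0 = x0 ∧ ∀ T, 0 < T → φ^[T] x0 = x0 → p - 1 ≤ T :=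
  stmt5_general p hp hp2 a b hb hΔ φ hφ
end

section
/- Let p be an odd prime and a, b ∈ (Z/pZ)^× with 4a + b² ≢ 0 (mod p), and let α ≠ β be the roots of t² - b t - a in Z/pZ (assuming they exist). Let k = ord(α·β⁻¹) be the multiplicative order of αβ⁻¹ in (Z/pZ)^×, and let Ω = {(αβ⁻¹)^j : 1 ≤ j ≤ k-1}. For x₀ ∉ {α, β}: if (x₀ - α)(x₀ - β)⁻¹ ∈ Ω then the orbit of x₀ under φ is purely periodic with least period k - 1; otherwise it is purely periodic with least period k. -/
/-!
The Möbius coordinate `ψ x = (x - α) * (x - β)⁻¹` sends the fixed points `α, β` of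
`x ↦ a * x⁻¹ + b` to `0, ∞` and turns this map into division by `q = α * β⁻¹`. On the projective
line `0` would be sent to `∞ = ψ⁻¹ 1`, but `φ 0 = b` is the image of `∞`, so in the coordinate
`ψ` the map `φ` divides by `q` and jumps over `1` (`skipDiv q`). On the `k - 1` nontrivial powers
of `q` this is a rotation; on every other nonzero value it is plain division by `q`, whose orbits
have length `k = orderOf q`.
-/

open Function Set Polynomial

theorem Function.minimalPeriod_eq_of_semiconjOn {α β : Type*} {f : α → α} {g : β → β}
    {e : α → β} {s : Set α} (hf : MapsTo f s s) (he : InjOn e s)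
    (h : ∀ x ∈ s, e (f x) = g (e x)) {x : α} (hx : x ∈ s) :
    minimalPeriod g (e x) = minimalPeriod f x := by
  have iterate_eq : ∀ n, e (f^[n] x) = g^[n] (e x) := by
    intro n
    induction n with
    | zero => rfl
    | succ n ih => rw [iterate_succ_apply', iterate_succ_apply', h _ (hf.iterate n hx), ih]
  rw [minimalPeriod_eq_minimalPeriod_iff]
  intro n
  rw [IsPeriodicPt, IsFixedPt, IsPeriodicPt, IsFixedPt, ← iterate_eq,
    he.eq_iff (hf.iterate n hx) hx]

theorem Function.iterate_eq_self_and_le_of_minimalPeriod_eq {α : Type*} {f : α → α} {x : α}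
    {m : ℕ} (h : minimalPeriod f x = m) : f^[m] x = x ∧ ∀ T, 0 < T → f^[T] x = x → m ≤ T :=
  h ▸ ⟨iterate_minimalPeriod, fun _ hT hx => IsPeriodicPt.minimalPeriod_le hT hx⟩

theorem ZMod.minimalPeriod_add_one (n : ℕ) (i : ZMod n) : minimalPeriod (· + 1) i = n := by
  rw [← Nat.dvd_right_iff_eq]
  intro m
  rw [← isPeriodicPt_iff_minimalPeriod_dvd, IsPeriodicPt, IsFixedPt, add_right_iterate_apply,
    add_eq_left, nsmul_one, ZMod.natCast_eq_zero_iff]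

theorem ne_pow_of_ne_pow_of_lt_orderOf {M : Type*} [Monoid M] {q w : M} (hq : 0 < orderOf q)
    (hw₁ : w ≠ 1) (hw : ∀ j, 1 ≤ j → j < orderOf q → w ≠ q ^ j) (j : ℕ) : w ≠ q ^ j := by
  rw [← pow_mod_orderOf]
  rcases Nat.eq_zero_or_pos (j % orderOf q) with h | h
  · rwa [h, pow_zero]
  · exact hw _ h (Nat.mod_lt _ hq)

section SkipDiv

variable {G₀ : Type*} [GroupWithZero G₀] [DecidableEq G₀]

/-- Division by `q`, jumping over `1`. -/
def skipDiv (q z : G₀) : G₀ := if z = q then q⁻¹ else z * q⁻¹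

theorem minimalPeriod_skipDiv_of_forall_ne_pow {q w : G₀} (hq : q ≠ 0) (hw₀ : w ≠ 0)
    (hw : ∀ j, w ≠ q ^ j) : minimalPeriod (skipDiv q) w = orderOf q := by
  let s : Set G₀ := {z | z ≠ 0 ∧ ∀ j, z ≠ q ^ j}
  have hs : MapsTo (· * q⁻¹) s s := fun z ⟨hz₀, hz⟩ =>
    ⟨mul_ne_zero hz₀ (inv_ne_zero hq), fun j h => hz (j + 1) (by
      rw [pow_succ, ← h, inv_mul_cancel_right₀ hq])⟩
  have hdiv : ∀ z ∈ s, z * q⁻¹ = skipDiv q z := fun z hz => by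
    rw [skipDiv, if_neg (by simpa using hz.2 1)]
  change minimalPeriod (skipDiv q) (id w) = _
  rw [minimalPeriod_eq_of_semiconjOn hs (injOn_id s) hdiv ⟨hw₀, hw⟩, orderOf,
    minimalPeriod_eq_minimalPeriod_iff]
  intro n
  rw [IsPeriodicPt, IsFixedPt, IsPeriodicPt, IsFixedPt, mul_right_iterate_apply,
    mul_eq_left₀ hw₀, mul_left_iterate_apply, mul_one, inv_pow, inv_eq_one]

theorem minimalPeriod_skipDiv_pow {q : G₀} {j : ℕ} (hj : 1 ≤ j) (hjq : j < orderOf q) :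
    minimalPeriod (skipDiv q) (q ^ j) = orderOf q - 1 := by
  set n := orderOf q - 1
  have hq : q ≠ 0 := (orderOf_pos_iff.mp (by omega)).isUnit.ne_zero
  have : NeZero n := ⟨by omega⟩
  -- `i ↦ q ^ (n - i)` lists the nontrivial powers of `q`, and `skipDiv q` advances the list by one.
  let e : ZMod n → G₀ := fun i => q ^ (n - i.val)
  have he : InjOn e univ := fun i _ i' _ h => by
    have := pow_injOn_Iio_orderOf (x := q) (by simp; omega) (by simp; omega) h
    exact ZMod.val_injective n (by have := i.val_lt; have := i'.val_lt; omega)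
  have hsemiconj : ∀ i ∈ univ, e (i + 1) = skipDiv q (e i) := by
    intro i _
    obtain ⟨m, hm, rfl⟩ : ∃ m < n, i = m := ⟨i.val, i.val_lt, (ZMod.natCast_zmod_val i).symm⟩
    simp only [e, ← Nat.cast_add_one]
    rcases (show m + 1 < n ∨ m + 1 = n by omega) with hlt | heq
    · have hne : q ^ (n - m) ≠ q := by
        rw [show n - m = n - (m + 1) + 1 by omega, pow_succ, Ne, mul_eq_right₀ hq]
        exact pow_ne_one_of_lt_orderOf (by omega) (by omega)
      rw [ZMod.val_cast_of_lt hlt, ZMod.val_cast_of_lt hm, skipDiv, if_neg hne,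
        show n - m = n - (m + 1) + 1 by omega, pow_succ, mul_inv_cancel_right₀ hq]
    · have hlast : q ^ (n - m) = q := by rw [show n - m = 1 by omega, pow_one]
      rw [heq, ZMod.natCast_self, ZMod.val_zero, ZMod.val_cast_of_lt hm, hlast,
        skipDiv, if_pos rfl, Nat.sub_zero, pow_sub₀ q hq (by omega), pow_orderOf_eq_one, pow_one,
        one_mul]
  have hj' : q ^ j = e ((n - j : ℕ) : ZMod n) := by
    simp only [e, ZMod.val_cast_of_lt (show n - j < n by omega)]
    congr 1; omega
  rw [hj', minimalPeriod_eq_of_semiconjOn (mapsTo_univ _ _) he hsemiconj (mem_univ _),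
    ZMod.minimalPeriod_add_one]

end SkipDiv

theorem add_eq_and_mul_eq_of_X_sq_sub_eq {R : Type*} [CommRing R] {a b α β : R}
    (h : (X ^ 2 - C b * X - C a : R[X]) = (X - C α) * (X - C β)) : α + β = b ∧ α * β = -a := by
  have h₀ := congrArg (Polynomial.eval 0) h
  have h₁ := congrArg (Polynomial.eval 1) h
  simp only [eval_sub, eval_mul, eval_pow, eval_X, eval_C] at h₀ h₁
  exact ⟨by linear_combination h₁ - h₀, by linear_combination -h₀⟩

section Inversive

variable {K : Type*} [Field K]

def inversiveMap (α β x : K) : K := -(α * β) * x⁻¹ + (α + β)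

def rootRatio (α β x : K) : K := (x - α) * (x - β)⁻¹

theorem inversiveMap_sub_right {α β x : K} (hx : x ≠ 0) :
    inversiveMap α β x - β = α * (x - β) * x⁻¹ := by
  rw [inversiveMap]; field_simp; ring

theorem inversiveMap_sub_left {α β x : K} (hx : x ≠ 0) :
    inversiveMap α β x - α = β * (x - α) * x⁻¹ := by
  rw [inversiveMap]; field_simp; ring

theorem mapsTo_inversiveMap {α β : K} (hα : α ≠ 0) :
    MapsTo (inversiveMap α β) {β}ᶜ {β}ᶜ := by
  intro x hx
  rw [mem_compl_singleton_iff, ← sub_ne_zero] at hx ⊢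
  rcases eq_or_ne x 0 with rfl | hx₀
  · simpa [inversiveMap] using hα
  · rw [inversiveMap_sub_right hx₀]
    exact mul_ne_zero (mul_ne_zero hα hx) (inv_ne_zero hx₀)

theorem injOn_rootRatio {α β : K} (hαβ : α ≠ β) : InjOn (rootRatio α β) {β}ᶜ := by
  intro x hx y hy h
  rw [mem_compl_singleton_iff, ← sub_ne_zero] at hx hy
  simp only [rootRatio] at h
  field_simp at h
  have : (α - β) * (x - y) = 0 := by linear_combination h
  exact sub_eq_zero.mp ((mul_eq_zero.mp this).resolve_left (sub_ne_zero.mpr hαβ))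

theorem rootRatio_inversiveMap [DecidableEq K] {α β x : K} (hα : α ≠ 0) (hβ : β ≠ 0) (hαβ : α ≠ β)
    (hx : x ≠ β) : rootRatio α β (inversiveMap α β x) = skipDiv (α * β⁻¹) (rootRatio α β x) := by
  have hzero : rootRatio α β 0 = α * β⁻¹ := by simp [rootRatio, inv_neg]
  rcases eq_or_ne x 0 with rfl | hx₀
  · rw [hzero, skipDiv, if_pos rfl]
    simp [inversiveMap, rootRatio]
  · have hne : rootRatio α β x ≠ α * β⁻¹ := fun h =>
      hx₀ (injOn_rootRatio hαβ hx (by simpa using hβ.symm) (h.trans hzero.symm))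
    rw [skipDiv, if_neg hne, rootRatio, inversiveMap_sub_left hx₀, inversiveMap_sub_right hx₀,
      rootRatio]
    have := sub_ne_zero.mpr hx
    field_simp

theorem rootRatio_ne_one {α β : K} (hαβ : α ≠ β) (x : K) : rootRatio α β x ≠ 1 := by
  intro h
  have hx : x - β ≠ 0 := fun hx => by simp [rootRatio, hx] at h
  rw [rootRatio, mul_inv_eq_one₀ hx, sub_right_inj] at h
  exact hαβ h

end Inversive

theorem stmt7_general (p : ℕ) (hp : p.Prime)
    (a b α β : ZMod p) (ha : IsUnit a) (hαβ : α ≠ β)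
    (hfac : (X ^ 2 - C b * X - C a : Polynomial (ZMod p)) = (X - C α) * (X - C β))
    (φ : ZMod p → ZMod p)
    (hφ : ∀ x, φ x = if x ≠ 0 then a * x⁻¹ + b else b)
    (x0 : ZMod p) (hx0α : x0 ≠ α) (hx0β : x0 ≠ β) :
    let k := orderOf (α * β⁻¹)
    let Ω : Set (ZMod p) := {w | ∃ j, 1 ≤ j ∧ j ≤ k - 1 ∧ w = (α * β⁻¹) ^ j}
    ((x0 - α) * (x0 - β)⁻¹ ∈ Ω →
      φ^[k - 1] x0 = x0 ∧ ∀ T, 0 < T → φ^[T] x0 = x0 → k - 1 ≤ T) ∧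
    ((x0 - α) * (x0 - β)⁻¹ ∉ Ω →
      φ^[k] x0 = x0 ∧ ∀ T, 0 < T → φ^[T] x0 = x0 → k ≤ T) := by
  have : Fact p.Prime := ⟨hp⟩
  intro k Ω
  obtain ⟨hsum, hprod⟩ := add_eq_and_mul_eq_of_X_sq_sub_eq hfac
  have hαβ₀ : α * β ≠ 0 := hprod ▸ neg_ne_zero.mpr ha.ne_zero
  have hα := left_ne_zero_of_mul hαβ₀
  have hβ := right_ne_zero_of_mul hαβ₀
  -- `0⁻¹ = 0`, so the formula `a * x⁻¹ + b` also gives `φ 0 = b`.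
  have hφ' : φ = inversiveMap α β := funext fun x => by
    rw [hφ, inversiveMap, hprod, neg_neg, hsum]
    split_ifs with hx <;> simp_all
  have hperiod : minimalPeriod φ x0 = minimalPeriod (skipDiv (α * β⁻¹)) (rootRatio α β x0) :=
    hφ' ▸ (minimalPeriod_eq_of_semiconjOn (mapsTo_inversiveMap hα) (injOn_rootRatio hαβ)
      (fun _ hx => rootRatio_inversiveMap hα hβ hαβ hx) hx0β).symm
  refine ⟨fun ⟨j, hj₁, hjk, hw⟩ => ?_, fun hw => ?_⟩
  · apply iterate_eq_self_and_le_of_minimalPeriod_eq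
    rw [hperiod, rootRatio, hw]
    exact minimalPeriod_skipDiv_pow hj₁ (by omega)
  · have hq : α * β⁻¹ ≠ 0 := mul_ne_zero hα (inv_ne_zero hβ)
    have hk : 0 < k := (isOfFinOrder_iff_isUnit.mpr hq.isUnit).orderOf_pos
    apply iterate_eq_self_and_le_of_minimalPeriod_eq
    rw [hperiod]
    refine minimalPeriod_skipDiv_of_forall_ne_pow hq
      (mul_ne_zero (sub_ne_zero.mpr hx0α) (inv_ne_zero (sub_ne_zero.mpr hx0β)))
      (ne_pow_of_ne_pow_of_lt_orderOf hk (rootRatio_ne_one hαβ x0) ?_)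
    exact fun j hj₁ hjk h => hw ⟨j, hj₁, by omega, h⟩

/-- Least periods of the inversive map when `t² - b t - a` has distinct roots
`α ≠ β` in `Z/pZ`: for `x₀ ∉ {α, β}`, the orbit is purely periodic with least
period `k - 1` if `(x₀-α)(x₀-β)⁻¹ ∈ Ω`, and `k` otherwise, where
`k = ord(αβ⁻¹)` and `Ω` is the set of nontrivial powers of `αβ⁻¹`. -/
theorem stmt7 (p : ℕ) (hp : p.Prime) (hp2 : p ≠ 2)
    (a b α β : ZMod p) (ha : IsUnit a) (hb : IsUnit b)
    (hΔ : 4 * a + b ^ 2 ≠ 0) (hαβ : α ≠ β)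
    (hfac : (X ^ 2 - C b * X - C a : Polynomial (ZMod p)) = (X - C α) * (X - C β))
    (φ : ZMod p → ZMod p)
    (hφ : ∀ x, φ x = if x ≠ 0 then a * x⁻¹ + b else b)
    (x0 : ZMod p) (hx0α : x0 ≠ α) (hx0β : x0 ≠ β) :
    let k := orderOf (α * β⁻¹)
    let Ω : Set (ZMod p) := {w | ∃ j, 1 ≤ j ∧ j ≤ k - 1 ∧ w = (α * β⁻¹) ^ j}
    ((x0 - α) * (x0 - β)⁻¹ ∈ Ω →
      φ^[k - 1] x0 = x0 ∧ ∀ T, 0 < T → φ^[T] x0 = x0 → k - 1 ≤ T) ∧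
    ((x0 - α) * (x0 - β)⁻¹ ∉ Ω →
      φ^[k] x0 = x0 ∧ ∀ T, 0 < T → φ^[T] x0 = x0 → k ≤ T) :=
  stmt7_general p hp a b α β ha hαβ hfac φ hφ x0 hx0α hx0β
end

section
/- Let p be an odd prime and a, b ∈ (Z/pZ)^× with 4a + b² ≢ 0 (mod p) and 4a + b² a nonzero quadratic residue modulo p. Let α ≠ β ∈ Z/pZ be the roots of t² - b t - a and k = ord(αβ⁻¹) in (Z/pZ)^×. Then the functional graph of φ on Z/pZ consists of exactly one cycle of length k - 1, exactly (p - k - 1)/k cycles of length k, and exactly two fixed points. -/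
open Polynomial

set_option linter.unusedVariables false

set_option linter.unusedSectionVars false

/-- The multiplication-by-`l` map that skips the value `1`. -/
def stmt8gmap {F : Type*} [Field F] [DecidableEq F] (l : F) (z : F) : F :=
  if z = 1 then 1 else if l * z = 1 then l else l * z

section gmap

variable {F : Type*} [Field F] [DecidableEq F] (l : F)

lemma stmt8_pow_mod (n : ℕ) : l ^ (n % orderOf l) = l ^ n := by
  conv_rhs => rw [← Nat.div_add_mod n (orderOf l), pow_add, pow_mul,
    pow_orderOf_eq_one, one_pow, one_mul]

variable (hl0 : l ≠ 0) (hk3 : 3 ≤ orderOf l)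

include hk3 in
lemma stmt8_pow_ne_one {i : ℕ} (h1 : 0 < i) (h2 : i < orderOf l) : l ^ i ≠ 1 := by
  intro h
  have := Nat.le_of_dvd h1 (orderOf_dvd_of_pow_eq_one h)
  omega

include hl0 hk3 in
lemma stmt8_pow_inj {i j : ℕ} (hi : i < orderOf l) (hj : j < orderOf l)
    (h : l ^ i = l ^ j) : i = j := by
  rcases le_total i j with hle | hle
  · by_contra hne
    have h2 : l ^ i * l ^ (j - i) = l ^ i * 1 := by
      rw [mul_one, ← pow_add]
      rw [h]; congr 1; omega
    have h3 : l ^ (j - i) = 1 := mul_left_cancel₀ (pow_ne_zero _ hl0) h2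
    exact stmt8_pow_ne_one l hk3 (by omega) (by omega) h3
  · by_contra hne
    have h2 : l ^ j * l ^ (i - j) = l ^ j * 1 := by
      rw [mul_one, ← pow_add]
      rw [← h]; congr 1; omega
    have h3 : l ^ (i - j) = 1 := mul_left_cancel₀ (pow_ne_zero _ hl0) h2
    exact stmt8_pow_ne_one l hk3 (by omega) (by omega) h3

include hk3 in
lemma stmt8_gstep (s : ℕ) :
    stmt8gmap l (l ^ (s % (orderOf l - 1) + 1)) = l ^ ((s + 1) % (orderOf l - 1) + 1) := by
  set k := orderOf l with hk
  have hn' : 2 ≤ k - 1 := by omega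
  set r := s % (k - 1) with hr
  have hrlt : r < k - 1 := Nat.mod_lt _ (by omega)
  have hz1 : l ^ (r + 1) ≠ 1 := stmt8_pow_ne_one l hk3 (by omega) (by omega)
  by_cases hcase : r = k - 2
  · have hmul : l * l ^ (r + 1) = 1 := by
      rw [← pow_succ']
      have : r + 1 + 1 = k := by omega
      rw [this]; exact pow_orderOf_eq_one l
    have hmod : (s + 1) % (k - 1) = 0 := by
      have : (s + 1) % (k - 1) = (r + 1 % (k - 1)) % (k - 1) := Nat.add_mod s 1 (k-1)
      rw [Nat.mod_eq_of_lt (by omega : 1 < k - 1)] at this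
      rw [this, hcase]
      have : k - 2 + 1 = k - 1 := by omega
      rw [this, Nat.mod_self]
    rw [stmt8gmap, if_neg hz1, if_pos hmul, hmod, pow_one]
  · have hne : l * l ^ (r + 1) ≠ 1 := by
      rw [← pow_succ']
      exact stmt8_pow_ne_one l hk3 (by omega) (by omega)
    have hmod : (s + 1) % (k - 1) = r + 1 := by
      have h1 : (s + 1) % (k - 1) = (r + 1 % (k - 1)) % (k - 1) := Nat.add_mod s 1 (k-1)
      rw [Nat.mod_eq_of_lt (by omega : 1 < k - 1)] at h1
      rw [h1, Nat.mod_eq_of_lt (by omega)]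
    rw [stmt8gmap, if_neg hz1, if_neg hne, hmod, ← pow_succ']

include hk3 in
lemma stmt8_giter (s n : ℕ) :
    (stmt8gmap l)^[n] (l ^ (s % (orderOf l - 1) + 1)) = l ^ ((s + n) % (orderOf l - 1) + 1) := by
  induction n with
  | zero => simp
  | succ n ih =>
    rw [Function.iterate_succ_apply', ih, stmt8_gstep l hk3 (s + n), Nat.add_assoc]

include hl0 hk3 in
lemma stmt8_giter_free {z : F} (hz : ∀ j : ℕ, l ^ j * z ≠ 1) (n : ℕ) :
    (stmt8gmap l)^[n] z = l ^ n * z := by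
  induction n with
  | zero => simp
  | succ n ih =>
    rw [Function.iterate_succ_apply', ih, stmt8gmap]
    have h1 : l ^ n * z ≠ 1 := hz n
    have h2 : l * (l ^ n * z) = l ^ (n + 1) * z := by ring
    rw [if_neg h1, h2, if_neg (hz (n + 1))]

end gmap

section orbit

variable {F : Type*} [Field F] [DecidableEq F] (l : F)
variable (hl0 : l ≠ 0) (hk3 : 3 ≤ orderOf l)

lemma stmt8_g_fix_zero (n : ℕ) : (stmt8gmap l)^[n] 0 = 0 := by
  have h : stmt8gmap l 0 = 0 := by simp [stmt8gmap]
  exact Function.iterate_fixed h n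

lemma stmt8_g_fix_one (n : ℕ) : (stmt8gmap l)^[n] 1 = 1 := by
  have h : stmt8gmap l 1 = 1 := by rw [stmt8gmap, if_pos rfl]
  exact Function.iterate_fixed h n

include hl0 hk3 in
lemma stmt8_caseSplit (z : F) :
    (∃ j, j < orderOf l ∧ z = l ^ j) ∨ (∀ j : ℕ, l ^ j * z ≠ 1) := by
  set k := orderOf l with hk
  by_cases h : ∃ j, j < k ∧ z = l ^ j
  · exact Or.inl h
  · right
    push_neg at h
    intro j hj
    set m := j % k with hm
    have hk0 : 0 < k := by omega
    have hmlt : m < k := Nat.mod_lt _ hk0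
    have hlj : l ^ j = l ^ m := (stmt8_pow_mod l j).symm
    rcases Nat.eq_zero_or_pos m with h0 | h0
    · have : l ^ j = 1 := by rw [hlj, h0, pow_zero]
      rw [this, one_mul] at hj
      exact h 0 hk0 (by rw [hj, pow_zero])
    · -- z = l ^ (k - m)
      have hz : z = l ^ (k - m) := by
        have h1 : l ^ m * z = l ^ m * l ^ (k - m) := by
          rw [← pow_add]
          have : m + (k - m) = k := by omega
          rw [this, ← hlj, hj]
          exact (pow_orderOf_eq_one l).symm
        exact mul_left_cancel₀ (pow_ne_zero _ hl0) h1
      exact h (k - m) (by omega) hz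

include hl0 hk3 in
lemma stmt8_gpow_period {j : ℕ} (hj1 : 1 ≤ j) (hjk : j < orderOf l) (T : ℕ) :
    (stmt8gmap l)^[T] (l ^ j) = l ^ j ↔ (orderOf l - 1) ∣ T := by
  set k := orderOf l with hk
  have hmod : (j - 1) % (k - 1) = j - 1 := Nat.mod_eq_of_lt (by omega)
  have hrw : l ^ j = l ^ ((j - 1) % (k - 1) + 1) := by rw [hmod]; congr 1; omega
  rw [hrw, stmt8_giter l hk3 (j - 1) T]
  constructor
  · intro h
    have he : (j - 1 + T) % (k - 1) + 1 = (j - 1) % (k - 1) + 1 :=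
      stmt8_pow_inj l hl0 hk3 (by have := Nat.mod_lt (j - 1 + T) (show 0 < k - 1 by omega); omega)
        (by omega) h
    have hmq : (j - 1) ≡ (j - 1 + T) [MOD k - 1] := by
      unfold Nat.ModEq; omega
    have := (Nat.modEq_iff_dvd' (by omega)).mp hmq
    have heq : j - 1 + T - (j - 1) = T := by omega
    rwa [heq] at this
  · intro ⟨c, hc⟩
    rw [hc, ← Nat.add_mul_mod_self_left (j-1) (k-1) c]

include hl0 hk3 in
lemma stmt8_gfree_period {z : F} (hz : ∀ j : ℕ, l ^ j * z ≠ 1) (hz0 : z ≠ 0) (T : ℕ) :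
    (stmt8gmap l)^[T] z = z ↔ (orderOf l) ∣ T := by
  rw [stmt8_giter_free l hl0 hk3 hz T]
  constructor
  · intro h
    have h1 : l ^ T * z = 1 * z := by rw [one_mul, h]
    exact orderOf_dvd_of_pow_eq_one (mul_right_cancel₀ hz0 h1)
  · intro ⟨c, hc⟩
    rw [hc, pow_mul, pow_orderOf_eq_one, one_pow, one_mul]

end orbit

section period

variable {F : Type*} [Field F] [DecidableEq F] (l : F)
variable (hl0 : l ≠ 0) (hk3 : 3 ≤ orderOf l)

include hl0 hk3 in
lemma stmt8_Qkm1 (z : F) :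
    (0 < orderOf l - 1 ∧ (stmt8gmap l)^[orderOf l - 1] z = z ∧
      ∀ T', 0 < T' → (stmt8gmap l)^[T'] z = z → orderOf l - 1 ≤ T') ↔
    ∃ j, 1 ≤ j ∧ j < orderOf l ∧ z = l ^ j := by
  set k := orderOf l with hk
  constructor
  · rintro ⟨hT, hfix, hmin⟩
    rcases stmt8_caseSplit l hl0 hk3 z with ⟨j, hjk, rfl⟩ | hfree
    · rcases Nat.eq_zero_or_pos j with h0 | h0
      · exfalso
        subst h0
        rw [pow_zero] at hfix hmin
        have := hmin 1 one_pos (stmt8_g_fix_one l 1)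
        omega
      · exact ⟨j, h0, hjk, rfl⟩
    · exfalso
      by_cases hz0 : z = 0
      · subst hz0
        have := hmin 1 one_pos (stmt8_g_fix_zero l 1)
        omega
      · have := Nat.le_of_dvd (by omega)
          ((stmt8_gfree_period l hl0 hk3 hfree hz0 (k - 1)).mp hfix)
        omega
  · rintro ⟨j, hj1, hjk, rfl⟩
    refine ⟨by omega, (stmt8_gpow_period l hl0 hk3 hj1 hjk (k - 1)).mpr dvd_rfl, ?_⟩
    intro T' hT' hfixT'
    exact Nat.le_of_dvd hT' ((stmt8_gpow_period l hl0 hk3 hj1 hjk T').mp hfixT')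

include hl0 hk3 in
lemma stmt8_Qk (z : F) :
    (0 < orderOf l ∧ (stmt8gmap l)^[orderOf l] z = z ∧
      ∀ T', 0 < T' → (stmt8gmap l)^[T'] z = z → orderOf l ≤ T') ↔
    (z ≠ 0 ∧ ∀ j, j < orderOf l → z ≠ l ^ j) := by
  set k := orderOf l with hk
  constructor
  · rintro ⟨hT, hfix, hmin⟩
    rcases stmt8_caseSplit l hl0 hk3 z with ⟨j, hjk, rfl⟩ | hfree
    · exfalso
      rcases Nat.eq_zero_or_pos j with h0 | h0
      · subst h0
        rw [pow_zero] at hmin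
        have := hmin 1 one_pos (stmt8_g_fix_one l 1)
        omega
      · have hdvd : (k - 1) ∣ k := (stmt8_gpow_period l hl0 hk3 h0 hjk k).mp hfix
        have h1 : (k - 1) ∣ (k - (k - 1)) := Nat.dvd_sub hdvd dvd_rfl
        have h2 : k - (k - 1) = 1 := by omega
        rw [h2] at h1
        have := Nat.le_of_dvd one_pos h1
        omega
    · by_cases hz0 : z = 0
      · exfalso
        subst hz0
        have := hmin 1 one_pos (stmt8_g_fix_zero l 1)
        omega
      · refine ⟨hz0, ?_⟩
        rintro j hjk rfl
        exact hfree (k - j) (by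
          rw [← pow_add]
          have : k - j + j = k := by omega
          rw [this]
          exact pow_orderOf_eq_one l)
  · rintro ⟨hz0, hnp⟩
    have hfree : ∀ j : ℕ, l ^ j * z ≠ 1 := by
      rcases stmt8_caseSplit l hl0 hk3 z with ⟨j, hjk, rfl⟩ | hfree
      · exact absurd rfl (hnp j hjk)
      · exact hfree
    refine ⟨by omega, (stmt8_gfree_period l hl0 hk3 hfree hz0 k).mpr dvd_rfl, ?_⟩
    intro T' hT' hfixT'
    exact Nat.le_of_dvd hT' ((stmt8_gfree_period l hl0 hk3 hfree hz0 T').mp hfixT')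

end period

section gfixed

variable {F : Type*} [Field F] [DecidableEq F] (l : F)
variable (hl0 : l ≠ 0) (hk3 : 3 ≤ orderOf l)

include hk3 in
lemma stmt8_g_fixed (z : F) : stmt8gmap l z = z ↔ z = 0 ∨ z = 1 := by
  have hl1 : l ≠ 1 := fun h => absurd (orderOf_eq_one_iff.mpr h) (by omega)
  constructor
  · intro h
    rw [stmt8gmap] at h
    split_ifs at h with h1 h2
    · right; exact h1
    · -- h : l = z, h2 : l * z = 1
      exfalso
      subst h
      have hz2 : (l - 1) * (l + 1) = 0 := by linear_combination h2
      rcases mul_eq_zero.mp hz2 with h' | h'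
      · exact h1 (by linear_combination h')
      · have hlm1 : l = -1 := by linear_combination h'
        have : l ^ 2 = 1 := by rw [hlm1]; ring
        have := Nat.le_of_dvd (by norm_num) (orderOf_dvd_of_pow_eq_one this)
        omega
    · left
      have h' : (l - 1) * z = 0 := by linear_combination h
      rcases mul_eq_zero.mp h' with h'' | h''
      · exact absurd (by linear_combination h'') hl1
      · exact h''
  · rintro (rfl | rfl)
    · simp [stmt8gmap]
    · rw [stmt8gmap, if_pos rfl]

end gfixed

/-- When `4a + b²` is a nonzero quadratic residue mod `p`, the functional graph
of the inversive map on `Z/pZ` has exactly two fixed points, one cycle of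
length `k - 1` (i.e. `k - 1` points of least period `k - 1`), and
`(p - k - 1)/k` cycles of length `k` (i.e. `p - k - 1` points of least period
`k`), where `k = ord(αβ⁻¹)`. -/

theorem stmt8 (p : ℕ) (hp : p.Prime) (hp2 : p ≠ 2)
    (a b α β : ZMod p) (ha : IsUnit a) (hb : IsUnit b)
    (hΔ : 4 * a + b ^ 2 ≠ 0) (hsq : IsSquare (4 * a + b ^ 2)) (hαβ : α ≠ β)
    (hfac : (X ^ 2 - C b * X - C a : Polynomial (ZMod p)) = (X - C α) * (X - C β))
    (φ : ZMod p → ZMod p)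
    (hφ : ∀ x, φ x = if x ≠ 0 then a * x⁻¹ + b else b) :
    let k := orderOf (α * β⁻¹)
    let isLeastPeriod : ZMod p → ℕ → Prop := fun x T =>
      0 < T ∧ φ^[T] x = x ∧ ∀ T', 0 < T' → φ^[T'] x = x → T ≤ T'
    {x : ZMod p | φ x = x}.ncard = 2 ∧
    {x : ZMod p | isLeastPeriod x (k - 1)}.ncard = k - 1 ∧
    {x : ZMod p | isLeastPeriod x k}.ncard = p - k - 1 := by
  haveI : Fact p.Prime := ⟨hp⟩
  intro k isLeastPeriod
  have hLP : ∀ x T, isLeastPeriod x T ↔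
      (0 < T ∧ φ^[T] x = x ∧ ∀ T', 0 < T' → φ^[T'] x = x → T ≤ T') := fun _ _ => Iff.rfl
  have hkdef : k = orderOf (α * β⁻¹) := rfl
  -- algebraic consequences of the factorization
  have hev : ∀ x : ZMod p, x ^ 2 - b * x - a = (x - α) * (x - β) := by
    intro x
    have := congrArg (Polynomial.eval x) hfac
    simpa using this
  have hab : a = -(α * β) := by
    have h0 := hev 0
    linear_combination -h0
  have hbsum : b = α + β := by
    have h1 := hev 1
    linear_combination -h1 - hab
  have ha0 : a ≠ 0 := ha.ne_zero
  have hb0 : b ≠ 0 := hb.ne_zero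
  have hα0 : α ≠ 0 := by
    rintro rfl
    exact ha0 (by rw [hab]; ring)
  have hβ0 : β ≠ 0 := by
    rintro rfl
    exact ha0 (by rw [hab]; ring)
  set l : ZMod p := α * β⁻¹ with hldef
  have hl0 : l ≠ 0 := mul_ne_zero hα0 (inv_ne_zero hβ0)
  have hl1 : l ≠ 1 := by
    intro h
    apply hαβ
    have : α * β⁻¹ * β = 1 * β := by rw [← hldef, h]
    rwa [mul_assoc, inv_mul_cancel₀ hβ0, mul_one, one_mul] at this
  have hlm1 : l ≠ -1 := by
    intro h
    apply hb0
    have : α * β⁻¹ * β = -1 * β := by rw [← hldef, h]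
    rw [mul_assoc, inv_mul_cancel₀ hβ0, mul_one] at this
    rw [hbsum, this]; ring
  have hk3 : 3 ≤ orderOf l := by
    have hfin : l ^ (p - 1) = 1 := ZMod.pow_card_sub_one_eq_one hl0
    have hpos : 0 < orderOf l := orderOf_pos_iff.mpr
      (isOfFinOrder_iff_pow_eq_one.mpr ⟨p - 1, by have := hp.two_le; omega, hfin⟩)
    have hne1 : orderOf l ≠ 1 := fun h => hl1 (orderOf_eq_one_iff.mp h)
    have hne2 : orderOf l ≠ 2 := by
      intro h
      have h2 : l ^ 2 = 1 := by rw [← h]; exact pow_orderOf_eq_one l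
      have hz2 : (l - 1) * (l + 1) = 0 := by linear_combination h2
      rcases mul_eq_zero.mp hz2 with h' | h'
      · exact hl1 (by linear_combination h')
      · exact hlm1 (by linear_combination h')
    omega
  -- the conjugating bijection
  set E : ZMod p → ZMod p := fun x => if x = α then 1 else (x - β) * (x - α)⁻¹ with hEdef
  have hE1 : ∀ y, E y = 1 ↔ y = α := by
    intro y
    constructor
    · intro h
      by_contra hy
      rw [hEdef] at h
      simp only [if_neg hy] at h
      have hyα : y - α ≠ 0 := sub_ne_zero.mpr hy
      have : (y - β) * (y - α)⁻¹ * (y - α) = 1 * (y - α) := by rw [h]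
      rw [mul_assoc, inv_mul_cancel₀ hyα, mul_one, one_mul] at this
      apply hαβ
      linear_combination this
    · rintro rfl
      rw [hEdef]; simp
  have hEinj : Function.Injective E := by
    intro x y h
    by_cases hx : x = α
    · subst hx
      have : E y = 1 := by rw [← h, (hE1 _).mpr rfl]
      exact ((hE1 y).mp this).symm
    · by_cases hy : y = α
      · subst hy
        exact absurd ((hE1 x).mp (by rw [h, (hE1 _).mpr rfl])) hx
      · rw [hEdef] at h
        simp only [if_neg hx, if_neg hy] at h
        have hxα : x - α ≠ 0 := sub_ne_zero.mpr hx
        have hyα : y - α ≠ 0 := sub_ne_zero.mpr hy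
        have h' : (x - β) * (y - α) = (y - β) * (x - α) := by
          field_simp at h
          linear_combination h
        have h2 : (α - β) * (x - y) = 0 := by linear_combination -h'
        rcases mul_eq_zero.mp h2 with h3 | h3
        · exact absurd (by linear_combination h3) hαβ
        · linear_combination h3
  have hEsurj : Function.Surjective E := Finite.surjective_of_injective hEinj
  have hE0 : ∀ y, E y = 0 ↔ y = β := by
    intro y
    constructor
    · intro h
      by_cases hy : y = α
      · exfalso; rw [(hE1 y).mpr hy] at h; exact one_ne_zero h
      · rw [hEdef] at h
        simp only [if_neg hy] at h
        rcases mul_eq_zero.mp h with h' | h'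
        · linear_combination h'
        · exact absurd h' (inv_ne_zero (sub_ne_zero.mpr hy))
    · intro h
      rw [h, hEdef]
      simp only [if_neg (show β ≠ α from fun h => hαβ h.symm)]
      rw [sub_self, zero_mul]
  -- conjugacy
  have hconj : ∀ x, E (φ x) = stmt8gmap l (E x) := by
    intro x
    by_cases hxα : x = α
    · have hφα : φ α = α := by
        rw [hφ, if_pos hα0, hab, hbsum]
        field_simp
        ring
      rw [hxα, hφα, (hE1 α).mpr rfl, stmt8gmap, if_pos rfl]
    · by_cases hxβ : x = β
      · have hφβ : φ β = β := by
          rw [hφ, if_pos hβ0, hab, hbsum]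
          field_simp
          ring
        rw [hxβ, hφβ, (hE0 β).mpr rfl]
        simp [stmt8gmap]
      · by_cases hx0 : x = 0
        · have hφ0 : φ 0 = b := by rw [hφ]; simp
          have hE0v : E 0 = β * α⁻¹ := by
            rw [hEdef]
            simp only [if_neg (show (0:ZMod p) ≠ α from fun h => hα0 h.symm)]
            rw [zero_sub, zero_sub]
            field_simp
          have hEb : E b = l := by
            have hbα : b ≠ α := by
              intro h
              apply hβ0
              have := hbsum.symm.trans h
              linear_combination this
            rw [hEdef]
            simp only [if_neg hbα]
            rw [hbsum, hldef]
            have h1 : α + β - β = α := by ring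
            have h2 : α + β - α = β := by ring
            rw [h1, h2]
          have hne1 : β * α⁻¹ ≠ 1 := by
            intro h
            apply hαβ
            have : β * α⁻¹ * α = 1 * α := by rw [h]
            rw [mul_assoc, inv_mul_cancel₀ hα0, mul_one, one_mul] at this
            exact this.symm
          have hmul1 : l * (β * α⁻¹) = 1 := by
            rw [hldef]
            field_simp
          rw [hx0, hφ0, hEb, hE0v, stmt8gmap, if_neg hne1, if_pos hmul1]
        · -- generic case
          have hxα' : x - α ≠ 0 := sub_ne_zero.mpr hxα
          have hφx : φ x = a * x⁻¹ + b := by rw [hφ, if_pos hx0]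
          have hfα : φ x - α = β * (x - α) * x⁻¹ := by
            rw [hφx, hab, hbsum]
            field_simp
            ring
          have hfβ : φ x - β = α * (x - β) * x⁻¹ := by
            rw [hφx, hab, hbsum]
            field_simp
            ring
          have hφxα : φ x ≠ α := by
            intro h
            have : β * (x - α) * x⁻¹ = 0 := by rw [← hfα, h, sub_self]
            exact (mul_ne_zero (mul_ne_zero hβ0 hxα') (inv_ne_zero hx0)) this
          have hkey : E (φ x) = l * E x := by
            rw [hEdef]
            simp only [if_neg hφxα, if_neg hxα]
            rw [hfβ, hfα, hldef]
            field_simp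
          have hEx1 : E x ≠ 1 := fun h => hxα ((hE1 x).mp h)
          have hlEx1 : l * E x ≠ 1 := by
            rw [← hkey]
            exact fun h => hφxα ((hE1 _).mp h)
          rw [hkey, stmt8gmap, if_neg hEx1, if_neg hlEx1]
  -- iterated conjugacy
  have hconjn : ∀ (n : ℕ) (x : ZMod p), E (φ^[n] x) = (stmt8gmap l)^[n] (E x) := by
    intro n
    induction n with
    | zero => intro x; simp
    | succ n ih =>
      intro x
      rw [Function.iterate_succ_apply', Function.iterate_succ_apply', hconj, ih]
  have hiter : ∀ (T : ℕ) (x : ZMod p), φ^[T] x = x ↔ (stmt8gmap l)^[T] (E x) = E x := by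
    intro T x
    constructor
    · intro h; rw [← hconjn T x, h]
    · intro h; apply hEinj; rw [hconjn T x, h]
  haveI : NeZero p := ⟨hp.ne_zero⟩
  refine ⟨?_, ?_, ?_⟩
  · -- fixed points
    have hset : {x : ZMod p | φ x = x} = {β, α} := by
      ext x
      simp only [Set.mem_setOf_eq, Set.mem_insert_iff, Set.mem_singleton_iff]
      constructor
      · intro h
        have hg : stmt8gmap l (E x) = E x := by rw [← hconj, h]
        rcases (stmt8_g_fixed l hk3 (E x)).mp hg with h0 | h1
        · exact Or.inl ((hE0 x).mp h0)
        · exact Or.inr ((hE1 x).mp h1)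
      · rintro (h | h)
        · rw [h]
          apply hEinj
          rw [hconj, (hE0 β).mpr rfl]
          exact (stmt8_g_fixed l hk3 0).mpr (Or.inl rfl)
        · rw [h]
          apply hEinj
          rw [hconj, (hE1 α).mpr rfl]
          exact (stmt8_g_fixed l hk3 1).mpr (Or.inr rfl)
    rw [hset]
    exact Set.ncard_pair (show β ≠ α from fun h => hαβ h.symm)
  · -- cycle of length k - 1
    have hfin1 : {x : ZMod p | isLeastPeriod x (k - 1)} =
        E ⁻¹' ↑((Finset.range (orderOf l - 1)).image fun j => l ^ (j + 1)) := by
      ext x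
      simp only [Set.mem_setOf_eq, Set.mem_preimage, Finset.mem_coe, Finset.mem_image,
        Finset.mem_range]
      rw [hLP, hkdef]
      simp only [hiter]
      rw [stmt8_Qkm1 l hl0 hk3 (E x)]
      constructor
      · rintro ⟨j, hj1, hjk, he⟩
        exact ⟨j - 1, by omega, by rw [show j - 1 + 1 = j by omega]; exact he.symm⟩
      · rintro ⟨j, hj, he⟩
        exact ⟨j + 1, by omega, by omega, he.symm⟩
    rw [hfin1, hkdef]
    calc (E ⁻¹' ↑((Finset.range (orderOf l - 1)).image fun j => l ^ (j + 1))).ncard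
        = (E '' (E ⁻¹' ↑((Finset.range (orderOf l - 1)).image fun j => l ^ (j + 1)))).ncard :=
          (Set.ncard_image_of_injective _ hEinj).symm
      _ = (↑((Finset.range (orderOf l - 1)).image fun j => l ^ (j + 1)) : Set (ZMod p)).ncard := by
          rw [Set.image_preimage_eq _ hEsurj]
      _ = ((Finset.range (orderOf l - 1)).image fun j => l ^ (j + 1)).card :=
          Set.ncard_coe_finset _
      _ = orderOf l - 1 := by
          rw [Finset.card_image_of_injOn, Finset.card_range]
          intro i hi j hj h
          simp only [Finset.coe_range, Set.mem_Iio] at hi hj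
          have := stmt8_pow_inj l hl0 hk3 (show i + 1 < orderOf l by omega)
            (show j + 1 < orderOf l by omega) h
          omega
  · -- cycles of length k
    have hfin2 : {x : ZMod p | isLeastPeriod x k} =
        E ⁻¹' ↑(Finset.univ \ insert (0 : ZMod p) ((Finset.range (orderOf l)).image fun j => l ^ j)) := by
      ext x
      simp only [Set.mem_setOf_eq, Set.mem_preimage, Finset.mem_coe, Finset.mem_sdiff,
        Finset.mem_univ, Finset.mem_insert, Finset.mem_image, Finset.mem_range, true_and]
      rw [hLP, hkdef]
      simp only [hiter]
      rw [stmt8_Qk l hl0 hk3 (E x)]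
      constructor
      · rintro ⟨h0, hnp⟩
        push_neg
        exact ⟨h0, fun j hj he => hnp j hj he.symm⟩
      · intro h
        push_neg at h
        exact ⟨h.1, fun j hj he => h.2 j hj he.symm⟩
    rw [hfin2, hkdef]
    have hcard : (Finset.univ \ insert (0 : ZMod p)
        ((Finset.range (orderOf l)).image fun j => l ^ j)).card = p - orderOf l - 1 := by
      rw [Finset.card_sdiff_of_subset (Finset.subset_univ _), Finset.card_univ, ZMod.card]
      have h0 : (0 : ZMod p) ∉ (Finset.range (orderOf l)).image fun j => l ^ j := by
        simp only [Finset.mem_image, Finset.mem_range, not_exists, not_and]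
        intro j hj
        exact pow_ne_zero j hl0
      rw [Finset.card_insert_of_notMem h0, Finset.card_image_of_injOn, Finset.card_range]
      · omega
      · intro i hi j hj h
        simp only [Finset.coe_range, Set.mem_Iio] at hi hj
        exact stmt8_pow_inj l hl0 hk3 hi hj h
    calc (E ⁻¹' ↑(Finset.univ \ insert (0 : ZMod p)
          ((Finset.range (orderOf l)).image fun j => l ^ j))).ncard
        = (E '' (E ⁻¹' ↑(Finset.univ \ insert (0 : ZMod p)
          ((Finset.range (orderOf l)).image fun j => l ^ j)))).ncard :=
          (Set.ncard_image_of_injective _ hEinj).symm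
      _ = (↑(Finset.univ \ insert (0 : ZMod p)
          ((Finset.range (orderOf l)).image fun j => l ^ j)) : Set (ZMod p)).ncard := by
          rw [Set.image_preimage_eq _ hEsurj]
      _ = (Finset.univ \ insert (0 : ZMod p)
          ((Finset.range (orderOf l)).image fun j => l ^ j)).card := Set.ncard_coe_finset _
      _ = p - orderOf l - 1 := hcard
end

section
/- Let p be an odd prime, e ≥ 1, a ∈ p·Z/p^e Z with a ≠ 0, b a unit, and x̃ a fixed point of φ (φ(x̃) = x̃, with x̃ a unit). Then for every x ∈ Z/p^e Z, v_p(φ(x) - x̃) = min(v_p(a) + v_p(x - x̃), e), where v_p denotes the (truncated) p-adic valuation v_p(y) = min(max{k : p^k | y}, e). -/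
/-!
For a unit `x`, the fixed-point equation turns `φ x - x̃` into `a (x⁻¹ - x̃⁻¹) = a x⁻¹ x̃⁻¹ (x̃ - x)`;
the truncated valuation is additive up to truncation and blind to units, which gives the formula.
For a nonunit `x`, `φ x - x̃ = b - x̃ = -a x̃⁻¹`, while `x - x̃` is a unit because `ZMod (p ^ e)`
is local, so both sides equal `v_p(a)`.
-/

open scoped Classical

/-- Truncated p-adic valuation on `Z/p^e Z`: `min (max{k : p^k ∣ y}, e)`, with
`vp 0 = e`. -/
def vp (p e : ℕ) (y : ZMod (p ^ e)) : ℕ :=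
  if y = 0 then e else min (padicValNat p y.val) e

section Valuation

variable {p e : ℕ}

lemma vp_le (y : ZMod (p ^ e)) : vp p e y ≤ e := by
  unfold vp
  split_ifs <;> simp

variable [Fact p.Prime]

lemma vp_one : vp p e 1 = 0 := by
  rcases Nat.eq_zero_or_pos e with rfl | he
  · exact Nat.le_zero.1 (vp_le 1)
  · have : Fact (1 < p ^ e) := ⟨Nat.one_lt_pow he.ne' (Fact.out : p.Prime).one_lt⟩
    simp [vp, ZMod.val_one]

lemma le_vp_iff {k : ℕ} (y : ZMod (p ^ e)) : k ≤ vp p e y ↔ k ≤ e ∧ p ^ k ∣ y.val := by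
  unfold vp
  split_ifs with hy
  · simp [hy]
  · rw [le_min_iff, padicValNat_dvd_iff_le ((ZMod.val_ne_zero y).2 hy), and_comm]

lemma vp_mul (y z : ZMod (p ^ e)) : vp p e (y * z) = min (vp p e y + vp p e z) e := by
  rcases eq_or_ne y 0 with rfl | hy
  · simp [vp]
  rcases eq_or_ne z 0 with rfl | hz
  · simp [vp]
  have hyv := (ZMod.val_ne_zero y).2 hy
  have hzv := (ZMod.val_ne_zero z).2 hz
  refine eq_of_forall_le_iff fun k => ?_
  rw [le_vp_iff, le_min_iff, @and_comm (k ≤ _ + _), and_congr_right_iff]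
  intro hk
  rw [ZMod.val_mul, Nat.dvd_mod_iff (pow_dvd_pow p hk),
    padicValNat_dvd_iff_le (mul_ne_zero hyv hzv), padicValNat.mul hyv hzv]
  simp only [vp, if_neg hy, if_neg hz]
  omega

lemma vp_of_isUnit {u : ZMod (p ^ e)} (hu : IsUnit u) : vp p e u = 0 := by
  obtain ⟨v, huv⟩ := hu.exists_right_inv
  have h := vp_mul u v
  rw [huv, vp_one] at h
  have := vp_le u
  omega

lemma vp_isUnit_mul {u : ZMod (p ^ e)} (hu : IsUnit u) (y : ZMod (p ^ e)) :
    vp p e (u * y) = vp p e y := by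
  rw [vp_mul, vp_of_isUnit hu, zero_add, min_eq_left (vp_le y)]

lemma vp_sub_comm (x y : ZMod (p ^ e)) : vp p e (x - y) = vp p e (y - x) := by
  rw [← neg_sub, ← neg_one_mul, vp_isUnit_mul isUnit_one.neg]

end Valuation

section Units

variable {p e : ℕ}

lemma ZMod.isUnit_iff_castHom_ne_zero (hp : p.Prime) (he : e ≠ 0) (y : ZMod (p ^ e)) :
    IsUnit y ↔ ZMod.castHom (dvd_pow_self p he) (ZMod p) y ≠ 0 := by
  have : NeZero (p ^ e) := ⟨pow_ne_zero e hp.ne_zero⟩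
  rw [← ZMod.natCast_zmod_val y, ZMod.isUnit_natCast_iff_not_dvd_pow hp (Nat.pos_of_ne_zero he),
    map_natCast, Ne, ZMod.natCast_eq_zero_iff]

lemma ZMod.isUnit_sub_of_not_isUnit (hp : p.Prime) (he : e ≠ 0) {x y : ZMod (p ^ e)}
    (hx : ¬IsUnit x) (hy : IsUnit y) : IsUnit (x - y) := by
  rw [ZMod.isUnit_iff_castHom_ne_zero hp he] at hx hy ⊢
  rw [not_not] at hx
  rwa [map_sub, hx, zero_sub, neg_ne_zero]

end Units

theorem stmt11_general (p : ℕ) (hp : p.Prime) (e : ℕ) (he : 1 ≤ e)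
    (a b : ZMod (p ^ e))
    (φ : ZMod (p ^ e) → ZMod (p ^ e))
    (hφ : ∀ x, φ x = if IsUnit x then a * x⁻¹ + b else b)
    (xt : ZMod (p ^ e)) (hxt : IsUnit xt) (hfix : φ xt = xt) :
    ∀ x : ZMod (p ^ e),
      vp p e (φ x - xt) = min (vp p e a + vp p e (x - xt)) e := by
  have := Fact.mk hp
  have hfix : a * xt⁻¹ + b = xt := by rwa [hφ, if_pos hxt] at hfix
  have hxt_inv := ZMod.mul_inv_of_unit xt hxt
  intro x
  by_cases hx : IsUnit x
  · have hx_inv := ZMod.mul_inv_of_unit x hx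
    have hdiff : φ x - xt = (x⁻¹ * xt⁻¹) * (a * (xt - x)) := by
      rw [hφ, if_pos hx]
      linear_combination hfix + (a * xt⁻¹) * hx_inv - (a * x⁻¹) * hxt_inv
    have hu : IsUnit (x⁻¹ * xt⁻¹) :=
      (IsUnit.of_mul_eq_one_right x hx_inv).mul (IsUnit.of_mul_eq_one_right xt hxt_inv)
    rw [hdiff, vp_isUnit_mul hu, vp_mul, vp_sub_comm]
  · have hdiff : φ x - xt = -xt⁻¹ * a := by
      rw [hφ, if_neg hx]
      linear_combination hfix
    have hu : IsUnit (-xt⁻¹) := (IsUnit.of_mul_eq_one_right xt hxt_inv).neg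
    rw [hdiff, vp_isUnit_mul hu, vp_of_isUnit (ZMod.isUnit_sub_of_not_isUnit hp (by omega) hx hxt),
      add_zero, min_eq_left (vp_le a)]

/-- For `a ∈ p·Z/p^e Z`, `a ≠ 0`, `b` a unit and `x̃` a unit fixed point of
the inversive map `φ`: for all `x`,
`v_p(φ(x) - x̃) = min (v_p(a) + v_p(x - x̃)) e`. -/
theorem stmt11 (p : ℕ) (hp : p.Prime) (hp2 : p ≠ 2) (e : ℕ) (he : 1 ≤ e)
    (a b : ZMod (p ^ e)) (hpa : (p : ZMod (p ^ e)) ∣ a) (ha : a ≠ 0)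
    (hb : IsUnit b)
    (φ : ZMod (p ^ e) → ZMod (p ^ e))
    (hφ : ∀ x, φ x = if IsUnit x then a * x⁻¹ + b else b)
    (xt : ZMod (p ^ e)) (hxt : IsUnit xt) (hfix : φ xt = xt) :
    ∀ x : ZMod (p ^ e),
      vp p e (φ x - xt) = min (vp p e a + vp p e (x - xt)) e :=
  stmt11_general p hp e he a b φ hφ xt hxt hfix
end

section
/- Let p be an odd prime, e ≥ 1, a ∈ p·(Z/p^e Z) with a ≠ 0, b a unit, and y a unit with y ≠ b such that y = φ(x) for some x. Then the number of x ∈ Z/p^e Z with φ(x) = y equals p^{v_p(a)}. -/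
open scoped Classical

/-!
A preimage `x` of `y ≠ b` is a unit with `a * x⁻¹ = y - b`, so inversion matches the fibre
`φ⁻¹(y)` with the solutions `u` of `a * u = y - b = a * u₀`. These form the coset of
`ker (a * ·)` through the unit `u₀`; since `ZMod (p ^ e)` is local and the kernel of
multiplication by `a ≠ 0` contains no unit, the whole coset consists of units. Finally
`|ker (a * ·)| = gcd (p ^ e, a) = p ^ v_p(a)`, as the image of `a * ·` is the cyclic group
generated by `a`, of order `p ^ e / gcd (p ^ e, a)`.
-/

instance ZMod.isLocalRing_prime_pow (p e : ℕ) [Fact p.Prime] [Nontrivial (ZMod (p ^ e))] :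
    IsLocalRing (ZMod (p ^ e)) :=
  IsLocalRing.of_surjective' (PadicInt.toZModPow e) (ZMod.ringHom_surjective _)

theorem isUnit_of_mul_eq_mul_left_of_isUnit {R : Type*} [CommRing R] [IsLocalRing R]
    {a u v : R} (ha : a ≠ 0) (hu : IsUnit u) (h : a * v = a * u) : IsUnit v := by
  by_contra hv
  have hdiff : ¬IsUnit (u - v) := fun hd =>
    ha (hd.mul_left_eq_zero.1 (by rw [mul_sub, h, sub_self]))
  exact (by simpa using IsLocalRing.nonunits_add hdiff hv : ¬IsUnit u) hu

theorem ncard_setOf_mul_eq_mul_left {R : Type*} [Ring R] (a u : R) :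
    {v | a * v = a * u}.ncard = {t | a * t = 0}.ncard := by
  rw [← Set.ncard_image_of_injective {t | a * t = 0} (add_right_injective u),
    Set.image_add_left]
  congr 1
  ext v
  simp only [Set.mem_preimage, Set.mem_ofPred_eq, mul_add, mul_neg, neg_add_eq_zero]
  exact eq_comm

namespace ZMod

theorem inv_inv_of_isUnit {n : ℕ} {x : ZMod n} (hx : IsUnit x) : x⁻¹⁻¹ = x := by
  obtain ⟨u, rfl⟩ := hx
  simp only [inv_coe_unit, inv_inv]

theorem isUnit_inv_of_isUnit {n : ℕ} {x : ZMod n} (hx : IsUnit x) : IsUnit x⁻¹ := by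
  obtain ⟨u, rfl⟩ := hx
  rw [inv_coe_unit]
  exact Units.isUnit _

theorem ncard_setOf_isUnit_inv_mem {n : ℕ} {S : Set (ZMod n)} (hS : ∀ u ∈ S, IsUnit u) :
    {x | IsUnit x ∧ x⁻¹ ∈ S}.ncard = S.ncard := by
  have himage : {x | IsUnit x ∧ x⁻¹ ∈ S} = (·⁻¹) '' S := by
    ext x
    constructor
    · rintro ⟨hx, hxS⟩
      exact ⟨x⁻¹, hxS, inv_inv_of_isUnit hx⟩
    · rintro ⟨u, hu, rfl⟩
      exact ⟨isUnit_inv_of_isUnit (hS u hu), by rwa [inv_inv_of_isUnit (hS u hu)]⟩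
  rw [himage, Set.InjOn.ncard_image]
  intro u hu v hv huv
  rw [← inv_inv_of_isUnit (hS u hu), ← inv_inv_of_isUnit (hS v hv)]
  exact congrArg (·⁻¹) huv

theorem range_mulLeft (n : ℕ) (a : ZMod n) :
    (AddMonoidHom.mulLeft a).range = AddSubgroup.zmultiples a := by
  ext t
  simp only [AddMonoidHom.mem_range, AddMonoidHom.coe_mulLeft, AddSubgroup.mem_zmultiples_iff,
    zsmul_eq_mul]
  constructor
  · rintro ⟨s, rfl⟩
    exact ⟨s.cast, by rw [intCast_zmod_cast, mul_comm]⟩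
  · rintro ⟨k, rfl⟩
    exact ⟨k, mul_comm _ _⟩

theorem ncard_setOf_mul_eq_zero (n : ℕ) [NeZero n] (a : ZMod n) :
    {t : ZMod n | a * t = 0}.ncard = n.gcd a.val := by
  have horder : addOrderOf a = n / n.gcd a.val := by
    simpa using addOrderOf_coe a.val (NeZero.ne n)
  have hprod := (AddMonoidHom.mulLeft a).ker.card_mul_index
  rw [AddSubgroup.index_ker, range_mulLeft, Nat.card_zmultiples, horder, Nat.card_zmod] at hprod
  have hgcd : n.gcd a.val ∣ n := Nat.gcd_dvd_left _ _
  have hpos : 0 < n / n.gcd a.val :=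
    Nat.div_pos (Nat.le_of_dvd (NeZero.pos n) hgcd) (Nat.gcd_pos_of_pos_left _ (NeZero.pos n))
  exact Nat.eq_of_mul_eq_mul_right hpos (hprod.trans (Nat.mul_div_cancel' hgcd).symm)

end ZMod

theorem Nat.gcd_prime_pow_eq_pow_min {p : ℕ} (hp : p.Prime) (e : ℕ) {n : ℕ} (hn : n ≠ 0) :
    (p ^ e).gcd n = p ^ min e (padicValNat p n) := by
  obtain ⟨i, -, hi⟩ := (Nat.dvd_prime_pow hp).1 (Nat.gcd_dvd_left (p ^ e) n)
  have h := congrArg (· p) (Nat.factorization_gcd (pow_ne_zero e hp.ne_zero) hn)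
  simp only [hi, hp.factorization_pow, Finsupp.inf_apply, Finsupp.single_eq_same,
    Nat.factorization_def n hp] at h
  rw [hi, h]

theorem gcd_val_eq_pow_vp {p : ℕ} (hp : p.Prime) (e : ℕ) (a : ZMod (p ^ e)) :
    (p ^ e).gcd a.val = p ^ vp p e a := by
  have : NeZero (p ^ e) := ⟨pow_ne_zero e hp.ne_zero⟩
  unfold vp
  split_ifs with ha
  · simp [ha]
  · rw [Nat.gcd_prime_pow_eq_pow_min hp e ((ZMod.val_ne_zero a).2 ha), min_comm]

theorem stmt13_general (p : ℕ) (hp : p.Prime) (e : ℕ)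
    (a b : ZMod (p ^ e)) (ha : a ≠ 0)
    (φ : ZMod (p ^ e) → ZMod (p ^ e))
    (hφ : ∀ x, φ x = if IsUnit x then a * x⁻¹ + b else b)
    (y : ZMod (p ^ e)) (hyb : y ≠ b)
    (him : ∃ x, φ x = y) :
    {x : ZMod (p ^ e) | φ x = y}.ncard = p ^ vp p e a := by
  have : Fact p.Prime := ⟨hp⟩
  have : NeZero (p ^ e) := ⟨pow_ne_zero e hp.ne_zero⟩
  have : Nontrivial (ZMod (p ^ e)) := nontrivial_of_ne a 0 ha
  have hfiber_iff : ∀ x, φ x = y ↔ IsUnit x ∧ a * x⁻¹ = y - b := by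
    intro x
    rw [hφ, eq_sub_iff_add_eq]
    split_ifs with hx <;> simp [hx, hyb.symm]
  obtain ⟨x₀, hx₀⟩ := him
  obtain ⟨hx₀_unit, hx₀_eq⟩ := (hfiber_iff x₀).1 hx₀
  have hfiber : {x | φ x = y} = {x | IsUnit x ∧ x⁻¹ ∈ {u | a * u = a * x₀⁻¹}} := by
    ext x
    simp only [Set.mem_ofPred_eq, hfiber_iff, hx₀_eq]
  have hsolutions_unit : ∀ u ∈ {u | a * u = a * x₀⁻¹}, IsUnit u := fun _ hu =>
    isUnit_of_mul_eq_mul_left_of_isUnit ha (ZMod.isUnit_inv_of_isUnit hx₀_unit) hu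
  rw [hfiber, ZMod.ncard_setOf_isUnit_inv_mem hsolutions_unit, ncard_setOf_mul_eq_mul_left,
    ZMod.ncard_setOf_mul_eq_zero, gcd_val_eq_pow_vp hp]

/-- For `a ∈ p·Z/p^e Z`, `a ≠ 0`, `b` a unit, and a unit `y ≠ b` in the image
of the inversive map `φ`, the number of preimages of `y` under `φ` is
`p^{v_p(a)}`. -/
theorem stmt13 (p : ℕ) (hp : p.Prime) (hp2 : p ≠ 2) (e : ℕ) (he : 1 ≤ e)
    (a b : ZMod (p ^ e)) (hpa : (p : ZMod (p ^ e)) ∣ a) (ha : a ≠ 0)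
    (hb : IsUnit b)
    (φ : ZMod (p ^ e) → ZMod (p ^ e))
    (hφ : ∀ x, φ x = if IsUnit x then a * x⁻¹ + b else b)
    (y : ZMod (p ^ e)) (hy : IsUnit y) (hyb : y ≠ b)
    (him : ∃ x, φ x = y) :
    {x : ZMod (p ^ e) | φ x = y}.ncard = p ^ vp p e a :=
  stmt13_general p hp e a b ha φ hφ y hyb him
end

section
/- Let p be an odd prime, e ≥ 1, n a positive integer, and x an element of Z/p^e Z (or more generally a commutative ring) of the form α = β + p·x where β is a unit. If Σ_{i=1}^{n} C(n,i)·(p x)^{i-1}·β^{n-i} ≡ 0 (mod p^s) for some s ≥ 1, then p^s divides n. (Inductive step: if p^k | n for k < s, then the sum is congruent to n·β^{n-1} mod p^{k+1}, hence p^{k+1} | n.) -/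
/-!
Modulo `p ^ (k + 1)`, once `p ^ k ∣ n`, every term of the sum with `i ≥ 2` vanishes: from
`i * C(n, i) = n * C(n - 1, i - 1)` the binomial coefficient loses at most `v_p(i)` factors of `p`
relative to `n`, and `v_p(i) ≤ i - 2` for odd `p` is paid for by `p ^ (i - 1)`. The sum is then
`n * β ^ (n - 1)`, and since `β` is a unit this forces `p ^ (k + 1) ∣ n`; induct on `k ≤ s`.
-/

open Finset

namespace Nat

theorem dvd_choose_mul (n i : ℕ) : n ∣ n.choose i * i := by
  rcases i with _ | i
  · simp
  rcases n with _ | n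
  · simp
  exact ⟨n.choose i, (add_one_mul_choose_eq n i).symm⟩

theorem lt_pow_pred_of_three_le {p i : ℕ} (hp : 3 ≤ p) (hi : 2 ≤ i) : i < p ^ (i - 1) :=
  calc i = (i - 1) + 1 := by omega
    _ ≤ 2 ^ (i - 1) := Nat.lt_pow_self (by norm_num)
    _ < p ^ (i - 1) := Nat.pow_lt_pow_left (by omega) (by omega)

theorem pow_succ_dvd_choose_mul_pow {p k n i : ℕ} (hp : p.Prime) (hp2 : p ≠ 2)
    (hk : p ^ k ∣ n) (hi : 2 ≤ i) : p ^ (k + 1) ∣ n.choose i * p ^ (i - 1) := by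
  obtain ⟨v, m, hpm, rfl⟩ := exists_eq_pow_mul_and_not_dvd (by omega : i ≠ 0) p hp.ne_one
  have hcop : (p ^ k).Coprime m := ((hp.coprime_iff_not_dvd).2 hpm).pow_left k
  have hkv : p ^ k ∣ n.choose (p ^ v * m) * p ^ v :=
    hcop.dvd_of_dvd_mul_right <| by
      rw [mul_assoc]; exact hk.trans (dvd_choose_mul n _)
  have hv : v + 1 ≤ p ^ v * m - 1 := by
    have hlt := lt_pow_pred_of_three_le (p := p) (by have := hp.two_le; omega) hi
    have hm : m ≠ 0 := by rintro rfl; exact hpm (dvd_zero p)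
    have hle : p ^ v ≤ p ^ v * m := Nat.le_mul_of_pos_right _ (Nat.pos_of_ne_zero hm)
    have := (Nat.pow_lt_pow_iff_right hp.one_lt).1 (hle.trans_lt hlt)
    omega
  calc p ^ (k + 1) ∣ n.choose (p ^ v * m) * p ^ v * p := by
        rw [pow_succ]; exact mul_dvd_mul_right hkv p
    _ = n.choose (p ^ v * m) * p ^ (v + 1) := by ring
    _ ∣ n.choose (p ^ v * m) * p ^ (p ^ v * m - 1) := mul_dvd_mul_left _ (pow_dvd_pow p hv)

end Nat

theorem sum_choose_mul_pow_eq_of_pow_dvd {R : Type*} [CommRing R] {p k n : ℕ} (hp : p.Prime)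
    (hp2 : p ≠ 2) (hR : (p : R) ^ (k + 1) = 0) (hk : p ^ k ∣ n) (x β : R) :
    ∑ i ∈ Icc 1 n, (n.choose i : R) * ((p : R) * x) ^ (i - 1) * β ^ (n - i) =
      n * β ^ (n - 1) := by
  rcases Nat.eq_zero_or_pos n with rfl | hn
  · simp
  rw [sum_eq_single_of_mem 1 (mem_Icc.2 ⟨le_rfl, hn⟩)]
  · simp
  intro i hi hi1
  obtain ⟨c, hc⟩ := Nat.pow_succ_dvd_choose_mul_pow hp hp2 hk
    (by rw [mem_Icc] at hi; omega : 2 ≤ i)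
  calc (n.choose i : R) * ((p : R) * x) ^ (i - 1) * β ^ (n - i)
        = ((n.choose i * p ^ (i - 1) : ℕ) : R) * (x ^ (i - 1) * β ^ (n - i)) := by
          push_cast; ring
    _ = 0 := by rw [hc]; push_cast; rw [hR, zero_mul, zero_mul]

theorem stmt16_general (p : ℕ) (hp : p.Prime) (hp2 : p ≠ 2) (s : ℕ)
    (x β : ZMod (p ^ s)) (hβ : IsUnit β) (n : ℕ)
    (h : ∑ i ∈ Finset.Icc 1 n,
        (n.choose i : ZMod (p ^ s)) * ((p : ZMod (p ^ s)) * x) ^ (i - 1)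
          * β ^ (n - i) = 0) :
    p ^ s ∣ n := by
  suffices H : ∀ k ≤ s, p ^ k ∣ n from H s le_rfl
  intro k
  induction k with
  | zero => simp
  | succ k ih =>
    intro hks
    let f : ZMod (p ^ s) →+* ZMod (p ^ (k + 1)) := ZMod.castHom (pow_dvd_pow p hks) _
    have hp_nil : (p : ZMod (p ^ (k + 1))) ^ (k + 1) = 0 := by exact_mod_cast ZMod.natCast_self _
    have hsum := congrArg f h
    simp only [map_sum, map_mul, map_pow, map_natCast, map_zero] at hsum
    rw [sum_choose_mul_pow_eq_of_pow_dvd hp hp2 hp_nil (ih (by omega))] at hsum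
    rw [← ZMod.natCast_eq_zero_iff]
    exact ((hβ.map f).pow _).mul_left_eq_zero.1 hsum

/-- If `β` is a unit mod `p^s` and
`Σ_{i=1}^{n} C(n,i)·(p x)^{i-1}·β^{n-i} ≡ 0 (mod p^s)`, then `p^s ∣ n`. -/
theorem stmt16 (p : ℕ) (hp : p.Prime) (hp2 : p ≠ 2) (s : ℕ) (hs : 1 ≤ s)
    (x β : ZMod (p ^ s)) (hβ : IsUnit β) (n : ℕ)
    (h : ∑ i ∈ Finset.Icc 1 n,
        (n.choose i : ZMod (p ^ s)) * ((p : ZMod (p ^ s)) * x) ^ (i - 1)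
          * β ^ (n - i) = 0) :
    p ^ s ∣ n :=
  stmt16_general p hp hp2 s x β hβ n h
end
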